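/- arXiv:1606.02452 — 3 statements merged into one kernel-verified Lean document; each statement's English description precedes it below -/
import Mathlib

section
/- Let I and J be two disjoint closed intervals in ℝ with |I| + |J| = 1 and |I| ≠ |J|, and let A = I ∪ J. Then \hat{\chi}_A(x) ≠ 0 for every x ∈ (−1, 1). -/
open MeasureTheory Real

/-- The Fourier transform of the indicator function of a set `A ⊆ ℝ`,
`\hat{χ}_A(x) = ∫_A e^{-2πi x t} dt`. -/
noncomputable def ftInd1 (A : Set ℝ) (x : ℝ) : ℂ :=
  ∫ t in A, Complex.exp (((-(2 * π * x * t) : ℝ) : ℂ) * Complex.I)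

/-! On an interval of length `ℓ` the transform has modulus `|sin (π x ℓ)| / (π |x|)`. If the
transforms over `I` and `J` cancel at `x ≠ 0`, their moduli agree, so
`sin (π |x| |I|) = sin (π |x| |J|)`; both arguments are positive with sum `π |x| < π`, and `sin`
takes no value twice on such a pair, whence `|I| = |J|`. At `x = 0` the transform is `|A| = 1`. -/

theorem ftInd1_zero (A : Set ℝ) : ftInd1 A 0 = volume.real A := by
  simp [ftInd1]

theorem integrableOn_ftInd1_integrand {A : Set ℝ} (hA : volume A ≠ ⊤) (x : ℝ) :
    IntegrableOn (fun t : ℝ => Complex.exp (((-(2 * π * x * t) : ℝ) : ℂ) * Complex.I)) A :=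
  Measure.integrableOn_of_bounded (M := 1) hA (Continuous.aestronglyMeasurable (by fun_prop))
    (.of_forall fun t => (Complex.norm_exp_ofReal_mul_I _).le)

theorem ftInd1_union {A B : Set ℝ} (hAB : Disjoint A B) (hB : MeasurableSet B)
    (hA : volume A ≠ ⊤) (hB' : volume B ≠ ⊤) (x : ℝ) :
    ftInd1 (A ∪ B) x = ftInd1 A x + ftInd1 B x :=
  setIntegral_union hAB hB (integrableOn_ftInd1_integrand hA x)
    (integrableOn_ftInd1_integrand hB' x)

theorem ftInd1_Icc {a b x : ℝ} (hab : a ≤ b) (hx : x ≠ 0) :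
    ftInd1 (Set.Icc a b) x =
      (Complex.exp (-(2 * π * x * Complex.I) * b) - Complex.exp (-(2 * π * x * Complex.I) * a))
        / -(2 * π * x * Complex.I) := by
  have hc : -(2 * π * x * Complex.I) ≠ 0 := by simp [hx, pi_ne_zero]
  rw [ftInd1, integral_Icc_eq_integral_Ioc, ← intervalIntegral.integral_of_le hab,
    ← integral_exp_mul_complex hc]
  congr 1 with t
  push_cast
  ring_nf

theorem norm_ftInd1_Icc {a b x : ℝ} (hab : a ≤ b) (hx : x ≠ 0) :
    ‖ftInd1 (Set.Icc a b) x‖ = |sin (π * x * (b - a))| / (π * |x|) := by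
  have hdiff : Complex.exp (-(2 * π * x * Complex.I) * b)
      - Complex.exp (-(2 * π * x * Complex.I) * a)
      = Complex.exp (((-(2 * π * x * a) : ℝ) : ℂ) * Complex.I)
        * (Complex.exp (Complex.I * ((-(2 * π * x * (b - a)) : ℝ) : ℂ)) - 1) := by
    rw [mul_sub, mul_one, ← Complex.exp_add]
    push_cast
    ring_nf
  rw [ftInd1_Icc hab hx, norm_div, hdiff, norm_mul, Complex.norm_exp_ofReal_mul_I,
    Complex.norm_exp_I_mul_ofReal_sub_one]
  simp only [norm_mul, norm_neg, Complex.norm_ofNat, Complex.norm_real, Complex.norm_I,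
    Real.norm_eq_abs, abs_of_pos pi_pos, mul_one]
  rw [show -(2 * π * x * (b - a)) / 2 = -(π * x * (b - a)) by ring, sin_neg, abs_neg,
    one_mul, abs_two, mul_assoc (2 : ℝ) π, mul_div_mul_left _ _ two_ne_zero]

theorem eq_of_sin_eq_sin_of_add_lt_pi {u v : ℝ} (hu : 0 < u) (hv : 0 < v) (huv : u + v < π)
    (h : sin u = sin v) : u = v := by
  obtain ⟨k, hk | hk⟩ := Real.sin_eq_sin_iff.mp h
  · have hk0 : k = 0 := by
      have h1 : (-1 : ℝ) < 2 * k := by nlinarith [pi_pos]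
      have h2 : (2 * k : ℝ) < 1 := by nlinarith [pi_pos]
      have : -1 < 2 * k := by exact_mod_cast h1
      have : 2 * k < 1 := by exact_mod_cast h2
      omega
    simp only [hk0, Int.cast_zero, mul_zero, zero_mul, zero_add] at hk
    linarith
  · have h1 : (0 : ℝ) < 2 * k + 1 := by nlinarith [pi_pos]
    have h2 : (2 * k + 1 : ℝ) < 1 := by nlinarith [pi_pos]
    have : 0 < 2 * k + 1 := by exact_mod_cast h1
    have : 2 * k + 1 < 1 := by exact_mod_cast h2
    omega

theorem two_intervals_no_zero_in_unit_interval
    (a b c d : ℝ) (hab : a < b) (hcd : c < d)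
    (hdisj : Disjoint (Set.Icc a b) (Set.Icc c d))
    (hsum : (b - a) + (d - c) = 1) (hne : b - a ≠ d - c) :
    ∀ x ∈ Set.Ioo (-1 : ℝ) 1, ftInd1 (Set.Icc a b ∪ Set.Icc c d) x ≠ 0 := by
  intro x hx
  rcases eq_or_ne x 0 with rfl | hx0
  · rw [ftInd1_zero,
      measureReal_union hdisj measurableSet_Icc measure_Icc_lt_top.ne measure_Icc_lt_top.ne,
      Real.volume_real_Icc_of_le hab.le, Real.volume_real_Icc_of_le hcd.le, hsum]
    norm_num
  rw [ftInd1_union hdisj measurableSet_Icc measure_Icc_lt_top.ne measure_Icc_lt_top.ne]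
  intro hzero
  have hnorm := congrArg norm (eq_neg_of_add_eq_zero_left hzero)
  rw [norm_neg, norm_ftInd1_Icc hab.le hx0, norm_ftInd1_Icc hcd.le hx0,
    div_left_inj' (by positivity)] at hnorm
  have hpx : 0 < π * |x| := by positivity
  have hpx1 : π * |x| < π := mul_lt_of_lt_one_right pi_pos (abs_lt.mpr hx)
  have hsin (ℓ : ℝ) (hℓ : 0 < ℓ) (hℓ1 : ℓ ≤ 1) : |sin (π * x * ℓ)| = sin (π * |x| * ℓ) := by
    have habs : |π * x * ℓ| = π * |x| * ℓ := by
      rw [abs_mul, abs_mul, abs_of_pos pi_pos, abs_of_pos hℓ]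
    rw [abs_sin_eq_sin_abs_of_abs_le_pi (by rw [habs]; nlinarith), habs]
  rw [hsin _ (by linarith) (by linarith), hsin _ (by linarith) (by linarith)] at hnorm
  refine hne (mul_left_cancel₀ hpx.ne' (eq_of_sin_eq_sin_of_add_lt_pi ?_ ?_ ?_ hnorm)) <;>
    nlinarith
end

section
/- Let I and J be two disjoint closed intervals in ℝ each of length 1/2, with midpoints m₁ and m₂, and let A = I ∪ J. Set Δ = 1/(2|m₁ − m₂|). Then the zero set of \hat{\chi}_A is exactly (2ℤ ∖ {0}) ∪ (2ℤ+1)Δ, i.e., {2k : k ∈ ℤ, k ≠ 0} ∪ {(2k+1)Δ : k ∈ ℤ}. -/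
/-!
The transform of an interval of length `2r` centred at `m` is the phase `e^{-2πixm}` times the
transform of `[-r, r]`, which is `2r · sinc (2πxr)`; with `sinc 0 = 1` this holds at `x = 0` too.
Hence `\hat{χ}_A(x) = (e^{-2πixm₁} + e^{-2πixm₂}) · ½ sinc (πx/2)`. The sinc factor vanishes
exactly on `2ℤ ∖ {0}`, and the two phases cancel exactly when `2x(m₁ - m₂)` is an odd integer.
-/

open MeasureTheory Real

lemma Real.sinc_eq_zero_iff {y : ℝ} : sinc y = 0 ↔ ∃ k : ℤ, k ≠ 0 ∧ y = k * π := by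
  rcases eq_or_ne y 0 with rfl | hy
  · simp [sinc_zero, pi_ne_zero]
  rw [sinc_of_ne_zero hy, div_eq_zero_iff, or_iff_left hy, sin_eq_zero_iff]
  constructor
  · rintro ⟨k, rfl⟩
    exact ⟨k, by rintro rfl; simp at hy, rfl⟩
  · rintro ⟨k, -, rfl⟩
    exact ⟨k, rfl⟩

lemma Complex.exp_mul_I_add_exp_mul_I_eq_zero_iff (a b : ℝ) :
    Complex.exp (a * Complex.I) + Complex.exp (b * Complex.I) = 0 ↔
      ∃ k : ℤ, a - b = (2 * k + 1) * π := by
  have hneg : -Complex.exp (b * Complex.I) = Complex.exp ((b + π : ℝ) * Complex.I) := by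
    push_cast
    rw [add_mul, Complex.exp_add, Complex.exp_pi_mul_I, mul_neg_one]
  rw [add_eq_zero_iff_eq_neg, hneg, Complex.exp_eq_exp_iff_exists_int]
  refine exists_congr fun k ↦ ⟨fun h ↦ ?_, fun h ↦ ?_⟩
  · have h' : (a : ℂ) * Complex.I = ((b + π + 2 * π * k : ℝ) : ℂ) * Complex.I := by
      rw [h]; push_cast; ring
    have := Complex.ofReal_injective (mul_right_cancel₀ Complex.I_ne_zero h')
    linarith
  · rw [show a = b + π + 2 * π * k by linarith]
    push_cast
    ring

lemma intervalIntegral_exp_neg_two_pi_mul_I (m r x : ℝ) :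
    ∫ t in (m - r)..(m + r), Complex.exp (((-(2 * π * x * t) : ℝ) : ℂ) * Complex.I) =
      Complex.exp (((-(2 * π * x * m) : ℝ) : ℂ) * Complex.I) *
        (2 * r * sinc (2 * π * x * r) : ℝ) := by
  rcases eq_or_ne r 0 with rfl | hr
  · simp
  rcases eq_or_ne x 0 with rfl | hx
  · simp only [mul_zero, zero_mul, neg_zero, Complex.ofReal_zero, Complex.exp_zero, sinc_zero,
      intervalIntegral.integral_const, Complex.real_smul, mul_one]
    push_cast
    ring
  set c : ℂ := ((-(2 * π * x) : ℝ) : ℂ) * Complex.I with hc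
  have hc0 : c ≠ 0 := by simp [hc, pi_ne_zero, hx]
  have hint (t : ℝ) :
      Complex.exp (((-(2 * π * x * t) : ℝ) : ℂ) * Complex.I) = Complex.exp (c * t) := by
    push_cast [hc]; ring_nf
  simp_rw [hint]
  rw [integral_exp_mul_complex hc0]
  set θ := 2 * π * x * r with hθ
  have hθ0 : θ ≠ 0 := by simp [hθ, pi_ne_zero, hx, hr]
  have hsub : Complex.exp (((-θ : ℝ) : ℂ) * Complex.I) - Complex.exp ((θ : ℂ) * Complex.I) =
      -2 * Real.sin θ * Complex.I := by
    rw [Complex.exp_mul_I, Complex.exp_mul_I]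
    push_cast
    rw [Complex.cos_neg, Complex.sin_neg]
    ring
  have e1 : c * ((m + r : ℝ) : ℂ) = c * m + ((-θ : ℝ) : ℂ) * Complex.I := by
    push_cast [hc, hθ]; ring
  have e2 : c * ((m - r : ℝ) : ℂ) = c * m + (θ : ℂ) * Complex.I := by
    push_cast [hc, hθ]; ring
  have hcm : c * (m : ℂ) = ((-(2 * π * x * m) : ℝ) : ℂ) * Complex.I := by
    push_cast [hc]; ring
  rw [sinc_of_ne_zero hθ0, e1, e2, Complex.exp_add, Complex.exp_add, ← mul_sub, hsub, hcm,
    mul_div_assoc]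
  congr 1
  rw [div_eq_iff hc0, hc]
  have hx' : (x : ℂ) ≠ 0 := Complex.ofReal_ne_zero.mpr hx
  have hr' : (r : ℂ) ≠ 0 := Complex.ofReal_ne_zero.mpr hr
  push_cast [hθ]
  field_simp

lemma setIntegral_Icc_exp_neg_two_pi_mul_I (m r x : ℝ) (hr : 0 ≤ r) :
    ∫ t in Set.Icc (m - r) (m + r), Complex.exp (((-(2 * π * x * t) : ℝ) : ℂ) * Complex.I) =
      Complex.exp (((-(2 * π * x * m) : ℝ) : ℂ) * Complex.I) *
        (2 * r * sinc (2 * π * x * r) : ℝ) := by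
  rw [integral_Icc_eq_integral_Ioc, ← intervalIntegral.integral_of_le (by linarith),
    intervalIntegral_exp_neg_two_pi_mul_I]

lemma ftInd1_union_Icc (m₁ m₂ r x : ℝ) (hr : 0 ≤ r)
    (hdisj : Disjoint (Set.Icc (m₁ - r) (m₁ + r)) (Set.Icc (m₂ - r) (m₂ + r))) :
    ftInd1 (Set.Icc (m₁ - r) (m₁ + r) ∪ Set.Icc (m₂ - r) (m₂ + r)) x =
      (Complex.exp (((-(2 * π * x * m₁) : ℝ) : ℂ) * Complex.I) +
          Complex.exp (((-(2 * π * x * m₂) : ℝ) : ℂ) * Complex.I)) *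
        (2 * r * sinc (2 * π * x * r) : ℝ) := by
  have hcont :
      Continuous fun t : ℝ ↦ Complex.exp (((-(2 * π * x * t) : ℝ) : ℂ) * Complex.I) := by
    fun_prop
  rw [ftInd1, setIntegral_union hdisj measurableSet_Icc hcont.integrableOn_Icc
    hcont.integrableOn_Icc, setIntegral_Icc_exp_neg_two_pi_mul_I m₁ r x hr,
    setIntegral_Icc_exp_neg_two_pi_mul_I m₂ r x hr, add_mul]

lemma exists_odd_mul_abs_iff (y c : ℝ) :
    (∃ k : ℤ, y = (2 * k + 1) * |c|) ↔ ∃ k : ℤ, y = (2 * k + 1) * c := by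
  rcases abs_choice c with h | h <;> rw [h]
  constructor <;> rintro ⟨k, rfl⟩ <;> exact ⟨-k - 1, by push_cast; ring⟩

lemma exp_add_exp_eq_zero_iff_exists_odd_mul {m₁ m₂ : ℝ} (hm : m₁ ≠ m₂) (x : ℝ) :
    Complex.exp (((-(2 * π * x * m₁) : ℝ) : ℂ) * Complex.I) +
        Complex.exp (((-(2 * π * x * m₂) : ℝ) : ℂ) * Complex.I) = 0 ↔
      ∃ k : ℤ, x = (2 * k + 1) * (1 / (2 * |m₁ - m₂|)) := by
  have hm' : m₂ - m₁ ≠ 0 := sub_ne_zero.mpr hm.symm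
  calc _ ↔ ∃ k : ℤ, -(2 * π * x * m₁) - -(2 * π * x * m₂) = (2 * k + 1) * π :=
        Complex.exp_mul_I_add_exp_mul_I_eq_zero_iff _ _
    _ ↔ ∃ k : ℤ, x = (2 * k + 1) * (1 / (2 * (m₂ - m₁))) := exists_congr fun k ↦ by
        field_simp
        constructor <;> intro h <;> linarith
    _ ↔ _ := by
        rw [← exists_odd_mul_abs_iff, abs_div, abs_mul, abs_sub_comm]
        norm_num

/-- The zero set of the Fourier transform of the indicator of the union of two
disjoint closed intervals of length `1/2` with midpoints `m₁, m₂` is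
`(2ℤ ∖ {0}) ∪ (2ℤ+1)Δ` where `Δ = 1/(2|m₁ - m₂|)`. -/
theorem zero_set_two_half_intervals
    (m₁ m₂ : ℝ)
    (hdisj : Disjoint (Set.Icc (m₁ - 1/4) (m₁ + 1/4)) (Set.Icc (m₂ - 1/4) (m₂ + 1/4))) :
    {x : ℝ | ftInd1 (Set.Icc (m₁ - 1/4) (m₁ + 1/4) ∪ Set.Icc (m₂ - 1/4) (m₂ + 1/4)) x = 0} =
      {x : ℝ | ∃ k : ℤ, k ≠ 0 ∧ x = 2 * k} ∪
      {x : ℝ | ∃ k : ℤ, x = (2 * k + 1) * (1 / (2 * |m₁ - m₂|))} := by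
  have hm : m₁ ≠ m₂ := by
    rintro rfl
    have hm₁ : m₁ ∈ Set.Icc (m₁ - 1/4) (m₁ + 1/4) := ⟨by linarith, by linarith⟩
    exact Set.disjoint_left.mp hdisj hm₁ hm₁
  ext x
  rw [Set.mem_union, Set.mem_ofPred_eq, Set.mem_ofPred_eq, Set.mem_ofPred_eq,
    ftInd1_union_Icc m₁ m₂ (1/4) x (by norm_num) hdisj, mul_eq_zero, Complex.ofReal_eq_zero,
    exp_add_exp_eq_zero_iff_exists_odd_mul hm, or_comm]
  refine Iff.or ?_ Iff.rfl
  rw [mul_eq_zero, or_iff_right (by norm_num), sinc_eq_zero_iff]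
  refine exists_congr fun k ↦ and_congr_right fun _ ↦ ?_
  rw [← sub_eq_zero, ← sub_eq_zero (a := x),
    show 2 * π * x * (1 / 4) - k * π = π / 2 * (x - 2 * k) by ring, mul_eq_zero,
    or_iff_right (by positivity)]
end

section
/- Let A ⊆ ℝ^m and B ⊆ ℝ^n be bounded measurable sets of positive measure. If A × B tiles ℝ^{m+n} by translations, i.e., there exists S ⊆ ℝ^{m+n} with ∑_{s∈S} \chi_{A×B}((x,y) − s) = 1 for almost every (x,y), then B tiles ℝ^n by translations: there exists T ⊆ ℝ^n with ∑_{t∈T} \chi_B(y − t) = 1 for almost every y ∈ ℝ^n. -/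
open MeasureTheory

noncomputable section

theorem factor_tiles_of_product_tiles {m n : ℕ}
    (A : Set (Fin m → ℝ)) (B : Set (Fin n → ℝ))
    (hAb : Bornology.IsBounded A) (hAm : MeasurableSet A) (hA0 : 0 < volume A)
    (hBb : Bornology.IsBounded B) (hBm : MeasurableSet B) (hB0 : 0 < volume B)
    (S : Set ((Fin m → ℝ) × (Fin n → ℝ)))
    (hS : ∀ᵐ p : (Fin m → ℝ) × (Fin n → ℝ),
      (∑' s : S, (A ×ˢ B).indicator (fun _ => (1 : ℝ)) (p - (s : (Fin m → ℝ) × (Fin n → ℝ)))) = 1) :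
    ∃ T : Set (Fin n → ℝ),
      ∀ᵐ y : Fin n → ℝ, (∑' t : T, B.indicator (fun _ => (1 : ℝ)) (y - (t : Fin n → ℝ))) = 1 := by
  classical
  rw [Measure.volume_eq_prod] at hS
  have h1 := Measure.ae_ae_of_ae_prod hS
  have hne : (volume : Measure (Fin m → ℝ)) ≠ 0 := by
    intro h
    exact isOpen_univ.measure_ne_zero volume Set.univ_nonempty (by rw [h]; rfl)
  haveI : (ae (volume : Measure (Fin m → ℝ))).NeBot := ae_neBot.mpr hne
  obtain ⟨x, hx⟩ := h1.exists
  -- the slice set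
  set Sx : Set ((Fin m → ℝ) × (Fin n → ℝ)) := {s ∈ S | x - s.1 ∈ A} with hSx
  -- rewrite the slice sum
  have key : ∀ y : Fin n → ℝ,
      (∑' s : S, (A ×ˢ B).indicator (fun _ => (1 : ℝ)) ((x, y) - (s : _))) =
      ∑' s : Sx, B.indicator (fun _ => (1 : ℝ)) (y - ((s : (Fin m → ℝ) × (Fin n → ℝ))).2) := by
    intro y
    have hsub : Sx ⊆ S := fun s hs => hs.1
    have e1 := tsum_subtype S (fun p => (A ×ˢ B).indicator (fun _ => (1 : ℝ)) ((x, y) - p))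
    have e2 := tsum_subtype Sx (fun p : (Fin m → ℝ) × (Fin n → ℝ) =>
      B.indicator (fun _ => (1 : ℝ)) (y - p.2))
    rw [e1, e2]
    congr 1
    funext s
    by_cases hsS : s ∈ S
    · by_cases hsA : x - s.1 ∈ A
      · have hsx : s ∈ Sx := ⟨hsS, hsA⟩
        rw [Set.indicator_of_mem hsS, Set.indicator_of_mem hsx]
        have : (x, y) - s = (x - s.1, y - s.2) := rfl
        rw [this, Set.indicator_apply, Set.indicator_apply]
        simp [Set.mem_prod, hsA]
      · have hsx : s ∉ Sx := fun h => hsA h.2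
        rw [Set.indicator_of_mem hsS, Set.indicator_of_notMem hsx]
        have : (x, y) - s = (x - s.1, y - s.2) := rfl
        rw [this, Set.indicator_of_notMem]
        simp [Set.mem_prod, hsA]
    · rw [Set.indicator_of_notMem hsS,
        Set.indicator_of_notMem (fun h => hsS (hsub h))]
  have hx' : ∀ᵐ y : Fin n → ℝ,
      (∑' s : Sx, B.indicator (fun _ => (1 : ℝ)) (y - ((s : (Fin m → ℝ) × (Fin n → ℝ))).2)) = 1 := by
    filter_upwards [hx] with y hy
    rw [← key y]; exact hy
  -- injectivity of snd on Sx
  have hinj : Set.InjOn Prod.snd Sx := by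
    intro s hs s' hs' hss
    by_contra hne'
    -- the set of good y's
    have hBpos : 0 < volume {y : Fin n → ℝ | y - s.2 ∈ B} := by
      have : {y : Fin n → ℝ | y - s.2 ∈ B} = (fun y => y + (-s.2)) ⁻¹' B := by
        ext y; simp [sub_eq_add_neg]
      rw [this, measure_preimage_add_right]
      exact hB0
    have hmeet : ∃ y, y - s.2 ∈ B ∧
        (∑' t : Sx, B.indicator (fun _ => (1 : ℝ)) (y - ((t : (Fin m → ℝ) × (Fin n → ℝ))).2)) = 1 := by
      by_contra hc
      push_neg at hc
      have hsubs : {y : Fin n → ℝ | y - s.2 ∈ B} ⊆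
          {y | ¬ (∑' t : Sx, B.indicator (fun _ => (1 : ℝ)) (y - ((t : (Fin m → ℝ) × (Fin n → ℝ))).2)) = 1} :=
        fun y hy => hc y hy
      have := measure_mono_null hsubs hx'
      exact absurd this hBpos.ne'
    obtain ⟨y, hyB, hy1⟩ := hmeet
    set f : Sx → ℝ := fun t => B.indicator (fun _ => (1 : ℝ)) (y - ((t : (Fin m → ℝ) × (Fin n → ℝ))).2) with hf
    have hfs : Summable f := by
      by_contra hns
      rw [tsum_eq_zero_of_not_summable hns] at hy1
      norm_num at hy1
    have hnonneg : ∀ t : Sx, 0 ≤ f t := fun t =>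
      Set.indicator_nonneg (fun _ _ => zero_le_one) _
    have hne2 : (⟨s, hs⟩ : Sx) ≠ ⟨s', hs'⟩ := fun h => hne' (congrArg Subtype.val h)
    have hsum2 : ∑ t ∈ ({⟨s, hs⟩, ⟨s', hs'⟩} : Finset Sx), f t ≤ ∑' t, f t :=
      Summable.sum_le_tsum _ (fun t _ => hnonneg t) hfs
    rw [Finset.sum_pair hne2] at hsum2
    have hf1 : f ⟨s, hs⟩ = 1 := by simp [hf, Set.indicator_of_mem hyB]
    have hf2 : f ⟨s', hs'⟩ = 1 := by
      have : y - s'.2 ∈ B := by rw [← hss]; exact hyB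
      simp [hf, Set.indicator_of_mem this]
    rw [hf1, hf2, hy1] at hsum2
    norm_num at hsum2
  refine ⟨Prod.snd '' Sx, ?_⟩
  filter_upwards [hx'] with y hy
  have e3 := tsum_image (g := Prod.snd) (s := Sx)
    (fun t => B.indicator (fun _ => (1 : ℝ)) (y - t)) hinj
  rw [e3]
  exact hy
end
end
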